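/- Let i ∈ T_n and let z ∈ D_Good(i), i.e., z is either the right endpoint of a maximal good block of i or is not contained in any good block of i. Then ψ(i) = ψ(i|_z) · ψ(σ^z i), where ψ(j) = Σ_{η: Π(η)=Π(j), |η|=|j|} p_η. -/

import Mathlib

/-- The alphabet `A = {0, 1, 3}`. -/
def A : Set ℕ := {0, 1, 3}

/-- The natural projection `Π(i) = Σ_{k=1}^n i_k 3^{-(k-1)}`. -/
noncomputable def proj : List ℕ → ℝ
  | [] => 0
  | a :: t => (a : ℝ) + proj t / 3

/-- `T_n`: words of length `n` over `A` containing no consecutive pair `(0,3)`. -/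
def Tset (n : ℕ) : Set (List ℕ) :=
  {l | l.length = n ∧ (∀ x ∈ l, x ∈ A) ∧ ¬ [0, 3] <:+: l}

/-- `ψ(i) = Σ_{η ∈ I_i} p_η`, where `p_η = Π_k d(η_k)` and
`I_i = {η ∈ A^{|i|} : Π(η) = Π(i)}`. -/
noncomputable def psi (d : ℕ → ℝ) (i : List ℕ) : ℝ :=
  ∑' η : {η : List ℕ // η.length = i.length ∧ (∀ x ∈ η, x ∈ A) ∧ proj η = proj i},
    ((η : List ℕ).map d).prod

/-- A good block of `i` occupying the (0-indexed) positions `k, ..., ℓ`: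
`i_k = ... = i_{ℓ-1} = 1` and `i_ℓ = 0`, with `k < ℓ`. -/
def GoodBlk (i : List ℕ) (k ℓ : ℕ) : Prop :=
  k < ℓ ∧ ℓ < i.length ∧ (∀ m, k ≤ m → m < ℓ → i.getD m 7 = 1) ∧ i.getD ℓ 7 = 0

/-- `z ∈ D_Good(i)` (with `z` a 1-based index, corresponding to 0-based position `z-1`):
`z` is the right endpoint of a (maximal) good block of `i`, or lies in no good block. -/
def DGood (i : List ℕ) (z : ℕ) : Prop :=
  (∃ k, GoodBlk i k (z - 1)) ∨ ∀ k ℓ, GoodBlk i k ℓ → ¬ (k ≤ z - 1 ∧ z - 1 ≤ ℓ)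

def bval : List ℕ → ℕ
  | [] => 0
  | a :: t => a * 3 ^ t.length + bval t

def rval : List ℕ → ℕ
  | [] => 0
  | a :: t => a + 3 * rval t

lemma memA_iff {x : ℕ} : x ∈ A ↔ x = 0 ∨ x = 1 ∨ x = 3 := by
  simp [A]

lemma rval_append (u v : List ℕ) : rval (u ++ v) = rval u + 3 ^ u.length * rval v := by
  induction u with
  | nil => simp [rval]
  | cons a t ih => simp [rval, ih, pow_succ]; ring

lemma bval_eq_rval_reverse (l : List ℕ) : bval l = rval l.reverse := by
  induction l with
  | nil => simp [bval, rval]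
  | cons a t ih => simp [bval, rval, ih, rval_append]; ring

lemma bval_append (u v : List ℕ) : bval (u ++ v) = bval u * 3 ^ v.length + bval v := by
  induction u with
  | nil => simp [bval]
  | cons a t ih => simp [bval, ih, pow_add]; ring

lemma proj_bval (l : List ℕ) : proj l * 3 ^ l.length = 3 * (bval l : ℝ) := by
  induction l with
  | nil => simp [proj, bval]
  | cons a t ih =>
    simp only [proj, bval, List.length_cons, pow_succ]
    push_cast
    nlinarith [ih]

lemma proj_eq_proj_iff {u v : List ℕ} (h : u.length = v.length) :
    proj u = proj v ↔ bval u = bval v := by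
  constructor
  · intro he
    have h1 := proj_bval u
    have h2 := proj_bval v
    rw [he, h] at h1
    have : (3 : ℝ) * (bval u : ℕ) = 3 * (bval v : ℕ) := by rw [← h1, ← h2]
    have : ((bval u : ℕ) : ℝ) = ((bval v : ℕ) : ℝ) := by linarith
    exact_mod_cast this
  · intro he
    have h1 := proj_bval u
    have h2 := proj_bval v
    rw [h, he] at h1
    have h3 : (0:ℝ) < 3 ^ v.length := by positivity
    have := h1.trans h2.symm
    exact mul_right_cancel₀ (ne_of_gt h3) this

lemma bval_bound (w : List ℕ) (hw : ∀ x ∈ w, x ∈ A) :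
    2 * bval w + 3 ≤ 3 ^ (w.length + 1) := by
  induction w with
  | nil => simp [bval]
  | cons a t ih =>
    have ha : a ≤ 3 := by
      rcases memA_iff.1 (hw a (by simp)) with h | h | h <;> omega
    have ih' := ih (fun x hx => hw x (by simp [hx]))
    simp only [bval, List.length_cons]
    have h3 : (0:ℕ) < 3 ^ t.length := by positivity
    rw [pow_succ, pow_succ] at *
    nlinarith

lemma bval_lt_of_head (a : ℕ) (t : List ℕ) (ha : a ≤ 1) (ht : ∀ x ∈ t, x ∈ A) :
    bval (a :: t) < 3 ^ (t.length + 1) := by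
  have := bval_bound t ht
  simp only [bval]
  have h3 : (0:ℕ) < 3 ^ t.length := by positivity
  rw [pow_succ] at *
  nlinarith

lemma no_increment : ∀ r : List ℕ, (∀ x ∈ r, x ∈ A) →
    (∀ j, ¬(r.getD j 7 = 3 ∧ r.getD (j + 1) 7 = 0)) →
    (r ≠ [] → r.getD 0 7 ≠ 0) →
    ∀ s : List ℕ, (∀ x ∈ s, x ∈ A) → s.length = r.length → rval s ≠ rval r + 1 := by
  intro r
  induction r with
  | nil =>
    intro _ _ _ s _ hs
    have : s = [] := List.length_eq_zero_iff.1 hs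
    simp [this, rval]
  | cons b r₀ ih =>
    intro hA h30 hh s hsA hsl heq
    match s with
    | [] => simp at hsl
    | b' :: s₀ =>
      have hbl : s₀.length = r₀.length := by simpa using hsl
      have hb : b = 1 ∨ b = 3 := by
        have := memA_iff.1 (hA b (by simp))
        have := hh (by simp)
        simp [List.getD] at this
        omega
      have hb' := memA_iff.1 (hsA b' (by simp))
      simp only [rval] at heq
      rcases hb with hb | hb
      · omega
      · -- b = 3, forced b' = 1 and rval s₀ = rval r₀ + 1
        have hb'1 : b' = 1 ∧ rval s₀ = rval r₀ + 1 := by omega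
        refine ih (fun x hx => hA x (by simp [hx]))
          (fun j => by have := h30 (j + 1); simpa using this)
          ?_ s₀ (fun x hx => hsA x (by simp [hx])) hbl hb'1.2
        intro hne h0
        have := h30 0
        simp [hb] at this
        match r₀, hne with
        | c :: r₁, _ =>
          simp [List.getD] at h0 this
          exact this h0

lemma decrement_head (b b' X Y : ℕ) (hb : b ∈ A) (hb' : b' ∈ A)
    (h : b + 3 * Y = b' + 3 * X + 1) : b = 1 := by
  rcases memA_iff.1 hb with h1 | h1 | h1 <;> rcases memA_iff.1 hb' with h2 | h2 | h2 <;> omega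

lemma no_carry : ∀ w : List ℕ, (∀ x ∈ w, x ∈ A) →
    (∀ j < w.length, (∀ k < j, w.getD k 7 = 1) → w.getD j 7 ≠ 0) →
    ∀ e : List ℕ, (∀ x ∈ e, x ∈ A) → e.length = w.length →
    bval e ≠ bval w + 3 ^ w.length := by
  intro w
  induction w with
  | nil =>
    intro _ _ e _ he
    have : e = [] := List.length_eq_zero_iff.1 he
    simp [this, bval]
  | cons a w₀ ih =>
    intro hA hsh e heA hel heq
    match e with
    | [] => simp at hel
    | b :: e₀ =>
      have hbl : e₀.length = w₀.length := by simpa using hel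
      have ha := memA_iff.1 (hA a (by simp))
      have hb := memA_iff.1 (heA b (by simp))
      have ha0 : a ≠ 0 := by
        have := hsh 0 (by simp) (by omega)
        simpa [List.getD] using this
      have hbe := bval_bound e₀ (fun x hx => heA x (by simp [hx]))
      rw [hbl] at hbe
      simp only [bval, List.length_cons, hbl] at heq
      rw [pow_succ] at heq hbe
      have ht : 0 < 3 ^ w₀.length := by positivity
      rcases ha with h1 | h1 | h1
      · omega
      · subst h1
        -- a = 1 : forced b = 3 and bval e₀ = bval w₀ + 3^|w₀|
        have hrec : b = 3 ∧ bval e₀ = bval w₀ + 3 ^ w₀.length := by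
          rcases hb with h2 | h2 | h2 <;> subst h2 <;> omega
        refine ih (fun x hx => hA x (by simp [hx])) ?_ e₀
          (fun x hx => heA x (by simp [hx])) hbl hrec.2
        intro j hj hk
        have := hsh (j + 1) (by simpa using Nat.succ_lt_succ hj) ?_
        · simpa using this
        · intro k hk'
          match k with
          | 0 => simp [List.getD]
          | k + 1 =>
            have := hk k (by omega)
            simpa using this
      · subst h1
        rcases hb with h2 | h2 | h2 <;> subst h2 <;> omega

lemma infix_of_getD (l : List ℕ) (j : ℕ) (h : j + 1 < l.length)
    (h0 : l.getD j 7 = 0) (h3 : l.getD (j + 1) 7 = 3) : [0, 3] <:+: l := by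
  have hj : j < l.length := by omega
  have e1 : l.drop j = l[j] :: l.drop (j + 1) := List.drop_eq_getElem_cons hj
  have e2 : l.drop (j + 1) = l[j+1] :: l.drop (j + 2) := List.drop_eq_getElem_cons h
  rw [List.getD_eq_getElem l 7 hj] at h0
  rw [List.getD_eq_getElem l 7 h] at h3
  have hpre : [0, 3] <+: l.drop j := by
    rw [e1, e2, h0, h3]
    exact ⟨l.drop (j + 2), rfl⟩
  exact hpre.isInfix.trans (List.drop_suffix j l).isInfix

lemma getD_reverse (l : List ℕ) (j : ℕ) (hj : j < l.length) :
    l.reverse.getD j 7 = l.getD (l.length - 1 - j) 7 := by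
  rw [List.getD_eq_getElem _ _ (by simpa using hj),
    List.getD_eq_getElem _ _ (by omega), List.getElem_reverse]

lemma key_lemma (i : List ℕ) (hiA : ∀ x ∈ i, x ∈ A) (hiT : ¬ [0, 3] <:+: i)
    (z : ℕ) (hz1 : 1 ≤ z) (hzn : z ≤ i.length) (hzD : DGood i z)
    (η : List ℕ) (hl : η.length = i.length) (hA : ∀ x ∈ η, x ∈ A)
    (hb : bval η = bval i) : bval (η.take z) = bval (i.take z) := by
  have hitl : (i.take z).length = z := by rw [List.length_take]; omega
  have hidl : (i.drop z).length = i.length - z := List.length_drop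
  have hηtl : (η.take z).length = z := by rw [List.length_take]; omega
  have hηdl : (η.drop z).length = i.length - z := by rw [List.length_drop, hl]
  have hitA : ∀ x ∈ i.take z, x ∈ A := fun x hx => hiA x (List.take_subset _ _ hx)
  have hidA : ∀ x ∈ i.drop z, x ∈ A := fun x hx => hiA x (List.drop_subset _ _ hx)
  have hηtA : ∀ x ∈ η.take z, x ∈ A := fun x hx => hA x (List.take_subset _ _ hx)
  have hηdA : ∀ x ∈ η.drop z, x ∈ A := fun x hx => hA x (List.drop_subset _ _ hx)
  set m := i.length - z with hm
  set t := 3 ^ m with hts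
  have ht : 0 < t := by positivity
  have heq : bval (η.take z) * t + bval (η.drop z) =
      bval (i.take z) * t + bval (i.drop z) := by
    have e1 : bval (η.take z ++ η.drop z) = bval η := by rw [List.take_append_drop]
    have e2 : bval (i.take z ++ i.drop z) = bval i := by rw [List.take_append_drop]
    rw [bval_append, hηdl] at e1
    rw [bval_append, hidl] at e2
    rw [e1, e2]; exact hb
  have hbid : 2 * bval (i.drop z) + 3 ≤ 3 * t := by
    have := bval_bound (i.drop z) hidA
    rw [hidl, pow_succ] at this; omega
  have hbηd : 2 * bval (η.drop z) + 3 ≤ 3 * t := by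
    have := bval_bound (η.drop z) hηdA
    rw [hηdl, pow_succ] at this; omega
  by_contra hne
  have hmain : (bval (i.take z) = bval (η.take z) + 1 ∧
        bval (η.drop z) = bval (i.drop z) + t) ∨
      (bval (η.take z) = bval (i.take z) + 1 ∧
        bval (i.drop z) = bval (η.drop z) + t) := by
    rcases Nat.lt_or_ge (bval (η.take z)) (bval (i.take z)) with hlt | hge
    · refine Or.inl ⟨?_, ?_⟩ <;>
      · have hD : bval (i.take z) = bval (η.take z) + (bval (i.take z) - bval (η.take z)) := by
          omega
        have hS : bval (η.drop z) =
            (bval (i.take z) - bval (η.take z)) * t + bval (i.drop z) := by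
          rw [hD, add_mul] at heq; omega
        have hD2 : bval (i.take z) - bval (η.take z) = 1 := by
          by_contra hD2
          have : 2 * t ≤ (bval (i.take z) - bval (η.take z)) * t :=
            Nat.mul_le_mul_right t (by omega)
          omega
        rw [hD2, one_mul] at hS
        omega
    · have hgt : bval (i.take z) < bval (η.take z) := by omega
      refine Or.inr ⟨?_, ?_⟩ <;>
      · have hD : bval (η.take z) = bval (i.take z) + (bval (η.take z) - bval (i.take z)) := by
          omega
        have hS : bval (i.drop z) =
            (bval (η.take z) - bval (i.take z)) * t + bval (η.drop z) := by
          rw [hD, add_mul] at heq; omega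
        have hD2 : bval (η.take z) - bval (i.take z) = 1 := by
          by_contra hD2
          have : 2 * t ≤ (bval (η.take z) - bval (i.take z)) * t :=
            Nat.mul_le_mul_right t (by omega)
          omega
        rw [hD2, one_mul] at hS
        omega
  clear hne heq
  -- in either case the "large" drop part has value ≥ t, so m ≥ 1 and z < i.length
  have hz : z < i.length := by
    rcases Nat.lt_or_ge z i.length with h | h
    · exact h
    · exfalso
      have hm0 : m = 0 := by omega
      have h1 : i.drop z = [] := by
        apply List.eq_nil_of_length_eq_zero; omega
      have h2 : η.drop z = [] := by
        apply List.eq_nil_of_length_eq_zero; omega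
      rw [hm0, pow_zero] at hts
      rcases hmain with ⟨_, h3⟩ | ⟨_, h3⟩ <;> rw [h1, h2] at h3 <;> simp [bval] at h3 <;> omega
  rcases hmain with ⟨hP, hS⟩ | ⟨hP, hS⟩
  · -- decrement case: bval (η.take z) = bval (i.take z) - 1; uses DGood
    -- step 1: i[z-1] = 1
    have hlast : i.getD (z - 1) 7 = 1 := by
      have hri := bval_eq_rval_reverse (i.take z)
      have hrη := bval_eq_rval_reverse (η.take z)
      have hrl : (i.take z).reverse.length = z := by simpa using hitl
      have hrlη : (η.take z).reverse.length = z := by simpa using hηtl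
      cases hcr : (i.take z).reverse with
      | nil => rw [hcr] at hrl; simp at hrl; omega
      | cons b r₀ =>
        cases hcs : (η.take z).reverse with
        | nil => rw [hcs] at hrlη; simp at hrlη; omega
        | cons b' s₀ =>
          have hbA : b ∈ A := by
            apply hitA
            have : b ∈ (i.take z).reverse := by rw [hcr]; simp
            simpa using this
          have hb'A : b' ∈ A := by
            apply hηtA
            have : b' ∈ (η.take z).reverse := by rw [hcs]; simp
            simpa using this
          have heq2 : b + 3 * rval r₀ = b' + 3 * rval s₀ + 1 := by
            have := hP
            rw [hri, hrη, hcr, hcs] at this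
            simpa [rval] using this
          have hb1 : b = 1 := decrement_head b b' (rval s₀) (rval r₀) hbA hb'A heq2
          -- b = head of reverse = i[z-1]
          have : (i.take z).reverse.getD 0 7 = b := by rw [hcr]; simp
          rw [getD_reverse _ _ (by omega), hitl] at this
          simp only [Nat.sub_zero] at this
          have hzz : z - 1 < (i.take z).length := by omega
          rw [List.getD_eq_getElem _ _ hzz, List.getElem_take,
            ← List.getD_eq_getElem i 7 (by omega)] at this
          omega
    -- step 2: DGood forces shape of i.drop z, contradiction with no_carry
    rcases hzD with ⟨k, hGB⟩ | hng
    · rw [hGB.2.2.2] at hlast; exact absurd hlast (by omega)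
    · refine no_carry (i.drop z) hidA ?_ (η.drop z) hηdA (by omega) (by rw [hidl]; exact hS)
      intro j hj hks h0
      rw [hidl] at hj
      have hblk : GoodBlk i (z - 1) (z + j) := by
        refine ⟨by omega, by omega, ?_, ?_⟩
        · intro mm h1 h2
          rcases Nat.lt_or_ge mm z with h3 | h3
          · have : mm = z - 1 := by omega
            rw [this]; exact hlast
          · have h4 : (i.drop z).getD (mm - z) 7 = 1 := hks (mm - z) (by omega)
            rw [List.getD_eq_getElem _ 7 (by rw [hidl]; omega), List.getElem_drop,
              ← List.getD_eq_getElem i 7 (by omega)] at h4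
            rw [show z + (mm - z) = mm by omega] at h4
            exact h4
        · rw [List.getD_eq_getElem _ 7 (by rw [hidl]; omega), List.getElem_drop,
            ← List.getD_eq_getElem i 7 (by omega)] at h0
          exact h0
      exact hng (z - 1) (z + j) hblk ⟨le_refl _, by omega⟩
  · -- increment case: bval (η.take z) = bval (i.take z) + 1; uses 03-freeness only
    -- step 1: i[z] = 3
    have hz3 : i.getD z 7 = 3 := by
      have hge : t ≤ bval (i.drop z) := by omega
      have hdc : i.drop z = i[z] :: i.drop (z + 1) := List.drop_eq_getElem_cons hz
      have hiz : i[z] ∈ A := hiA _ (List.getElem_mem _)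
      by_contra hne3
      rw [List.getD_eq_getElem i 7 hz] at hne3
      have hle1 : i[z] ≤ 1 := by rcases memA_iff.1 hiz with h | h | h <;> omega
      have := bval_lt_of_head i[z] (i.drop (z + 1)) hle1
        (fun x hx => hiA x (List.drop_subset _ _ hx))
      rw [← hdc] at this
      have hlen : (i.drop (z + 1)).length + 1 = m := by
        rw [List.length_drop]; omega
      rw [hlen] at this
      omega
    -- step 2: i[z-1] ≠ 0 (else [0,3] infix)
    have hlast0 : i.getD (z - 1) 7 ≠ 0 := by
      intro h0
      exact hiT (infix_of_getD i (z - 1) (by omega) h0 (by rw [show z - 1 + 1 = z by omega]; exact hz3))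
    -- step 3: contradiction with no_increment on reverses of take parts
    have hri := bval_eq_rval_reverse (i.take z)
    have hrη := bval_eq_rval_reverse (η.take z)
    refine no_increment (i.take z).reverse
      (fun x hx => hitA x (by simpa using hx)) ?_ ?_ (η.take z).reverse
      (fun x hx => hηtA x (by simpa using hx)) (by simp [hitl, hηtl])
      (by rw [← hri, ← hrη]; exact hP)
    · -- no (3,0) consecutive in the reverse
      rintro j ⟨h3, h0⟩
      have hrl : (i.take z).reverse.length = z := by simpa using hitl
      have hj1 : j + 1 < z := by
        by_contra hc
        rcases Nat.lt_or_ge j z with hj | hj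
        · have : j + 1 = z := by omega
          rw [List.getD_eq_default _ _ (by omega)] at h0
          omega
        · rw [List.getD_eq_default _ _ (by omega)] at h3
          omega
      rw [getD_reverse (List.take z i) j (by rw [hitl]; omega), hitl] at h3
      rw [getD_reverse (List.take z i) (j + 1) (by rw [hitl]; omega), hitl] at h0
      -- indices z-1-j (=3) and z-1-(j+1) = z-2-j (=0) in i.take z
      have h3' : (i.take z).getD (z - 1 - j) 7 = 3 := h3
      have h0' : (i.take z).getD (z - 1 - (j + 1)) 7 = 0 := h0
      have hinf : [0, 3] <:+: i.take z := by
        apply infix_of_getD (i.take z) (z - 2 - j)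
        · rw [hitl]; omega
        · rw [show z - 2 - j = z - 1 - (j+1) by omega]; exact h0'
        · rw [show z - 2 - j + 1 = z - 1 - j by omega]; exact h3'
      exact hiT (hinf.trans (List.take_prefix z i).isInfix)
    · -- head of reverse ≠ 0, i.e. i[z-1] ≠ 0
      intro hnil
      rw [getD_reverse (List.take z i) 0 (by rw [hitl]; omega), hitl]
      simp only [Nat.sub_zero]
      rw [List.getD_eq_getElem _ _ (by rw [hitl]; omega), List.getElem_take,
        ← List.getD_eq_getElem i 7 (by omega)]
      exact hlast0

lemma idx_finite (j : List ℕ) :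
    Finite {η : List ℕ // η.length = j.length ∧ (∀ x ∈ η, x ∈ A) ∧ proj η = proj j} := by
  let F : {η : List ℕ // η.length = j.length ∧ (∀ x ∈ η, x ∈ A) ∧ proj η = proj j} →
      (Fin j.length → Fin 4) := fun η k =>
    ⟨(η : List ℕ).getD k 0, by
      have hk : (k : ℕ) < (η : List ℕ).length := by rw [η.2.1]; exact k.2
      rw [List.getD_eq_getElem _ _ hk]
      have := η.2.2.1 _ (List.getElem_mem hk)
      rcases memA_iff.1 this with h | h | h <;> omega⟩
  apply Finite.of_injective F
  intro a b hab
  ext1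
  apply List.ext_getElem (by rw [a.2.1, b.2.1])
  intro k h1 h2
  have hk : k < j.length := by rw [← a.2.1]; exact h1
  have h3 := congrArg (fun f => ((f ⟨k, hk⟩ : Fin 4) : ℕ)) hab
  simp only [F] at h3
  rwa [List.getD_eq_getElem _ _ h1, List.getD_eq_getElem _ _ h2] at h3

/-- For `i ∈ T_n` and `z ∈ D_Good(i)`, `ψ(i) = ψ(i|_z) · ψ(σ^z i)`. -/
theorem stmt_13 (p₀ p₁ p₃ : ℝ) (h₀ : 0 < p₀) (h₁ : 0 < p₁) (h₃ : 0 < p₃)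
    (hsum : p₀ + p₁ + p₃ = 1)
    (d : ℕ → ℝ) (hd : d = fun k => if k = 0 then p₀ else if k = 1 then p₁ else p₃)
    (n : ℕ) (i : List ℕ) (hi : i ∈ Tset n)
    (z : ℕ) (hz1 : 1 ≤ z) (hzn : z ≤ n) (hzD : DGood i z) :
    psi d i = psi d (i.take z) * psi d (i.drop z) := by
  obtain ⟨hlen, hiA, hiT⟩ := hi
  have hzl : z ≤ i.length := by omega
  have hitl : (i.take z).length = z := by rw [List.length_take]; omega
  have hidl : (i.drop z).length = i.length - z := List.length_drop
  -- index types
  set I := {η : List ℕ // η.length = i.length ∧ (∀ x ∈ η, x ∈ A) ∧ proj η = proj i} with hI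
  set T := {η : List ℕ // η.length = (i.take z).length ∧ (∀ x ∈ η, x ∈ A) ∧
      proj η = proj (i.take z)} with hT
  set D := {η : List ℕ // η.length = (i.drop z).length ∧ (∀ x ∈ η, x ∈ A) ∧
      proj η = proj (i.drop z)} with hD
  -- key facts about members of I
  have hkey : ∀ η : List ℕ, η.length = i.length → (∀ x ∈ η, x ∈ A) → proj η = proj i →
      bval (η.take z) = bval (i.take z) ∧ bval (η.drop z) = bval (i.drop z) := by
    intro η h1 h2 h3
    have hb : bval η = bval i := (proj_eq_proj_iff h1).1 h3
    have htk := key_lemma i hiA hiT z hz1 hzl hzD η h1 h2 hb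
    refine ⟨htk, ?_⟩
    have e1 : bval (η.take z ++ η.drop z) = bval η := by rw [List.take_append_drop]
    have e2 : bval (i.take z ++ i.drop z) = bval i := by rw [List.take_append_drop]
    rw [bval_append] at e1 e2
    have hdl : (η.drop z).length = (i.drop z).length := by
      rw [List.length_drop, List.length_drop, h1]
    rw [hdl, htk] at e1
    omega
  -- the equivalence I ≃ T × D
  have eTo : ∀ η : I, ((η : List ℕ).take z).length = (i.take z).length ∧
      (∀ x ∈ (η : List ℕ).take z, x ∈ A) ∧ proj ((η : List ℕ).take z) = proj (i.take z) := by
    intro η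
    obtain ⟨h1, h2, h3⟩ := η.2
    refine ⟨by rw [List.length_take, List.length_take, h1], 
      fun x hx => h2 x (List.take_subset _ _ hx), ?_⟩
    exact (proj_eq_proj_iff (by rw [List.length_take, List.length_take, h1])).2
      (hkey _ h1 h2 h3).1
  have eTo' : ∀ η : I, ((η : List ℕ).drop z).length = (i.drop z).length ∧
      (∀ x ∈ (η : List ℕ).drop z, x ∈ A) ∧ proj ((η : List ℕ).drop z) = proj (i.drop z) := by
    intro η
    obtain ⟨h1, h2, h3⟩ := η.2
    refine ⟨by rw [List.length_drop, List.length_drop, h1],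
      fun x hx => h2 x (List.drop_subset _ _ hx), ?_⟩
    exact (proj_eq_proj_iff (by rw [List.length_drop, List.length_drop, h1])).2
      (hkey _ h1 h2 h3).2
  have eInv : ∀ (a : T) (b : D), ((a : List ℕ) ++ (b : List ℕ)).length = i.length ∧
      (∀ x ∈ (a : List ℕ) ++ (b : List ℕ), x ∈ A) ∧
      proj ((a : List ℕ) ++ (b : List ℕ)) = proj i := by
    intro a b
    obtain ⟨ha1, ha2, ha3⟩ := a.2
    obtain ⟨hb1, hb2, hb3⟩ := b.2
    have hL : ((a : List ℕ) ++ (b : List ℕ)).length = i.length := by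
      rw [List.length_append, ha1, hb1, hitl, hidl]; omega
    refine ⟨hL, ?_, ?_⟩
    · intro x hx
      rcases List.mem_append.1 hx with h | h
      · exact ha2 x h
      · exact hb2 x h
    · apply (proj_eq_proj_iff hL).2
      have hba : bval (a : List ℕ) = bval (i.take z) :=
        (proj_eq_proj_iff ha1).1 ha3
      have hbb : bval (b : List ℕ) = bval (i.drop z) :=
        (proj_eq_proj_iff hb1).1 hb3
      rw [bval_append, hba, hbb, hb1]
      conv_rhs => rw [← List.take_append_drop z i, bval_append]
  let e : I ≃ T × D :=
    { toFun := fun η => (⟨(η : List ℕ).take z, eTo η⟩, ⟨(η : List ℕ).drop z, eTo' η⟩)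
      invFun := fun p => ⟨(p.1 : List ℕ) ++ (p.2 : List ℕ), eInv p.1 p.2⟩
      left_inv := by
        intro η
        apply Subtype.ext
        simp [List.take_append_drop]
      right_inv := by
        rintro ⟨a, b⟩
        have ha : (a : List ℕ).length = z := by rw [a.2.1, hitl]
        ext : 1
        · apply Subtype.ext
          exact List.take_left' ha
        · apply Subtype.ext
          exact List.drop_left' ha }
  haveI : Finite I := idx_finite i
  haveI : Finite T := idx_finite (i.take z)
  haveI : Finite D := idx_finite (i.drop z)
  haveI : Fintype I := Fintype.ofFinite I
  haveI : Fintype T := Fintype.ofFinite T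
  haveI : Fintype D := Fintype.ofFinite D
  rw [psi, psi, psi, tsum_fintype, tsum_fintype, tsum_fintype]
  rw [Finset.sum_mul_sum]
  have hsplit : ∀ l : List ℕ,
      (((l.take z).map d).prod) * (((l.drop z).map d).prod) = ((l.map d).prod) := by
    intro l
    rw [← List.prod_append, ← List.map_append, List.take_append_drop]
  calc (∑ η : I, (((η : List ℕ)).map d).prod)
      = ∑ η : I, ((((e η).1 : List ℕ)).map d).prod * ((((e η).2 : List ℕ)).map d).prod := by
        apply Finset.sum_congr rfl
        intro η _
        exact (hsplit (η : List ℕ)).symm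
    _ = ∑ p : T × D, (((p.1 : List ℕ)).map d).prod * (((p.2 : List ℕ)).map d).prod :=
        Equiv.sum_comp e
          (fun p : T × D => (((p.1 : List ℕ)).map d).prod * (((p.2 : List ℕ)).map d).prod)
    _ = ∑ a : T, ∑ b : D, (((a : List ℕ)).map d).prod * (((b : List ℕ)).map d).prod :=
        Fintype.sum_prod_type _
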